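/- Suppose X is symmetric positive definite and satisfies trace(SX) + λ‖X‖_1 = p, where S ⪰ 0, λ > 0, and ‖X‖_1 is the entrywise ℓ1 norm. Then the maximum eigenvalue of X is at most p/λ. -/

import Mathlib

/-!
Since `S` and `X` are positive semidefinite, `trace (S X) ≥ 0`, so the zero gap gives
`λ ‖X‖₁ ≤ p`. Every eigenvalue of the positive semidefinite `X` is at most `trace X`,
which is at most `‖X‖₁`.
-/

namespace Matrix

open scoped ComplexOrder

variable {n 𝕜 : Type*} [Fintype n] [RCLike 𝕜]

open scoped MatrixOrder in
theorem PosSemidef.trace_mul_nonneg {A B : Matrix n n 𝕜} (hA : A.PosSemidef) (hB : B.PosSemidef) :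
    0 ≤ (A * B).trace := by
  classical
  obtain ⟨C, rfl⟩ := CStarAlgebra.nonneg_iff_eq_star_mul_self.mp hB.nonneg
  rw [← Matrix.mul_assoc, trace_mul_cycle, star_eq_conjTranspose]
  exact (hA.mul_mul_conjTranspose_same C).trace_nonneg

theorem PosSemidef.eigenvalues_le_re_trace [DecidableEq n] {A : Matrix n n 𝕜} (hA : A.PosSemidef)
    (i : n) : hA.1.eigenvalues i ≤ RCLike.re A.trace := by
  rw [hA.1.trace_eq_sum_eigenvalues, map_sum]
  simp only [RCLike.ofReal_re]
  exact Finset.single_le_sum (fun j _ => hA.eigenvalues_nonneg j) (Finset.mem_univ i)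

theorem trace_le_sum_sum_abs {R : Type*} [AddCommGroup R] [LinearOrder R] [IsOrderedAddMonoid R]
    (M : Matrix n n R) : M.trace ≤ ∑ i, ∑ j, |M i j| :=
  Finset.sum_le_sum fun i _ => (le_abs_self (M i i)).trans <|
    Finset.single_le_sum (f := fun j => |M i j|) (fun _ _ => abs_nonneg _) (Finset.mem_univ i)

end Matrix

theorem eigenvalue_bound_of_zero_gap (p : ℕ) (S X : Matrix (Fin p) (Fin p) ℝ)
    (hS : S.PosSemidef) (hX : X.PosDef) (lam : ℝ) (hlam : 0 < lam)
    (hgap : (S * X).trace + lam * ∑ i, ∑ j, |X i j| = p) :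
    ∀ i, hX.1.eigenvalues i ≤ p / lam := by
  intro i
  have hSX : 0 ≤ (S * X).trace := hS.trace_mul_nonneg hX.posSemidef
  rw [le_div_iff₀' hlam]
  calc lam * hX.1.eigenvalues i ≤ lam * ∑ i, ∑ j, |X i j| := by
        gcongr
        simpa using (hX.posSemidef.eigenvalues_le_re_trace i).trans X.trace_le_sum_sum_abs
    _ ≤ p := by linarith
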